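/- arXiv:1911.04672 — 6 statements merged into one kernel-verified Lean document; each statement's English description precedes it below -/
import Mathlib

section
/- The set of feedback gains L (of size m₂ × n) such that the pair (A - B₂L, B₁) is stabilizable is an open subset of the space of m₂ × n real matrices. -/
open Matrix

/-- A real square matrix is Schur stable if every complex eigenvalue has modulus `< 1`. -/
def IsSchur {n : ℕ} (M : Matrix (Fin n) (Fin n) ℝ) : Prop :=
  ∀ μ ∈ spectrum ℂ (M.map Complex.ofReal), ‖μ‖ < 1

open scoped NNReal ENNReal

namespace spectrum

variable {𝕜 A : Type*} [NormedField 𝕜] [ProperSpace 𝕜] [NormedRing A] [NormedAlgebra 𝕜 A]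
  [CompleteSpace A]

theorem spectralRadius_lt_iff {a : A} {r : ℝ≥0} (hr : 0 < r) :
    spectralRadius 𝕜 a < r ↔ ∀ z ∈ spectrum 𝕜 a, ‖z‖₊ < r := by
  refine ⟨fun h z hz => ENNReal.coe_lt_coe.mp ((le_iSup₂ (α := ℝ≥0∞) z hz).trans_lt h),
    fun h => ?_⟩
  rcases (spectrum 𝕜 a).eq_empty_or_nonempty with hσ | hσ
  · simpa [spectralRadius, hσ] using hr
  · exact spectralRadius_lt_of_forall_lt_of_nonempty hσ h

end spectrum

section GelfandFormula

variable {A : Type*} [NormedRing A] [NormedAlgebra ℂ A] [CompleteSpace A] [NormOneClass A]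

/-- The spectral radius is upper semicontinuous: by Gelfand's formula it is the infimum over `k`
of the continuous functions `a ↦ ‖a ^ (k + 1)‖ ^ (1 / (k + 1))`. -/
theorem isOpen_setOf_spectralRadius_lt (r : ℝ≥0∞) :
    IsOpen {a : A | spectralRadius ℂ a < r} := by
  have hunion : {a : A | spectralRadius ℂ a < r} =
      ⋃ k : ℕ, {a | (‖a ^ (k + 1)‖₊ : ℝ≥0∞) ^ (1 / (k + 1) : ℝ) < r} := by
    ext a
    simp only [Set.mem_ofPred_eq, Set.mem_iUnion]
    constructor
    · intro ha
      have hG := (Filter.tendsto_add_atTop_iff_nat 1).mpr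
        (spectrum.pow_nnnorm_pow_one_div_tendsto_nhds_spectralRadius a)
      obtain ⟨k, hk⟩ := (hG.eventually_lt_const ha).exists
      exact ⟨k, by exact_mod_cast hk⟩
    · rintro ⟨k, hk⟩
      refine lt_of_le_of_lt ?_ hk
      simpa using spectrum.spectralRadius_le_pow_nnnorm_pow_one_div ℂ a k
  rw [hunion]
  exact isOpen_iUnion fun k => isOpen_lt (by fun_prop) continuous_const

end GelfandFormula

attribute [local instance] Matrix.linftyOpNormedRing Matrix.linftyOpNormedAlgebra

theorem isSchur_iff_spectralRadius_lt_one {n : ℕ} (M : Matrix (Fin n) (Fin n) ℝ) :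
    IsSchur M ↔ spectralRadius ℂ (M.map Complex.ofReal) < 1 := by
  rw [IsSchur, ← ENNReal.coe_one, spectrum.spectralRadius_lt_iff one_pos]
  simp only [← NNReal.coe_lt_coe, coe_nnnorm, NNReal.coe_one]

theorem isOpen_setOf_isSchur (n : ℕ) : IsOpen {M : Matrix (Fin n) (Fin n) ℝ | IsSchur M} := by
  -- `NormOneClass` fails for `0 × 0` matrices, whose only element has norm `0`.
  rcases isEmpty_or_nonempty (Fin n) with _ | _
  · have hall : ∀ M : Matrix (Fin n) (Fin n) ℝ, IsSchur M := fun M μ hμ => by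
      simp [spectrum.of_subsingleton] at hμ
    simp [hall]
  · simp only [isSchur_iff_spectralRadius_lt_one]
    exact (isOpen_setOf_spectralRadius_lt (A := Matrix (Fin n) (Fin n) ℂ) 1).preimage
      (continuous_id.matrix_map Complex.continuous_ofReal)

/-- The set of gains `L` such that `(A - B₂ L, B₁)` is stabilizable is open. -/
theorem stabilizable_set_isOpen {n m₁ m₂ : ℕ}
    (A : Matrix (Fin n) (Fin n) ℝ) (B₁ : Matrix (Fin n) (Fin m₁) ℝ)
    (B₂ : Matrix (Fin n) (Fin m₂) ℝ) :
    IsOpen {L : Matrix (Fin m₂) (Fin n) ℝ |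
      ∃ F : Matrix (Fin m₁) (Fin n) ℝ, IsSchur (A - B₂ * L - B₁ * F)} := by
  simp only [Set.ofPred_exists]
  exact isOpen_iUnion fun F => (isOpen_setOf_isSchur n).preimage (by fun_prop)
end

section
/- A matrix M ∈ ℝ^{n×n} is Schur stable (spectral radius < 1) if and only if there exists a positive definite symmetric matrix X such that MᵀXM - X is negative definite. -/
open Matrix

/-!
If `ρ(M) < 1`, Gelfand's formula gives `‖Mᵏ‖ ≤ rᵏ` eventually for some `r < 1`, so the series
`X = ∑ₖ (Mᵏ)ᵀ Mᵏ` converges; it is positive definite and telescopes to `X - MᵀXM = 1`.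
Conversely, if `Mv = μv` with `v ≠ 0` (complex), then
`v* (X - MᵀXM) v = (1 - |μ|²) v* X v`, and both quadratic forms are positive.
-/

open Filter
open scoped ENNReal ComplexOrder

section BanachAlgebra

variable {A : Type*} [NormedRing A] [NormedAlgebra ℂ A] [CompleteSpace A]

theorem spectralRadius_lt_one_of_forall_norm_lt_one {a : A}
    (h : ∀ z ∈ spectrum ℂ a, ‖z‖ < 1) : spectralRadius ℂ a < 1 := by
  cases subsingleton_or_nontrivial A
  · simp [spectralRadius, spectrum.of_subsingleton]
  · exact_mod_cast spectrum.spectralRadius_lt_of_forall_lt a (r := 1) fun z hz => h z hz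

theorem summable_norm_pow_of_spectralRadius_lt_one {a : A} (h : spectralRadius ℂ a < 1) :
    Summable fun k => ‖a ^ k‖ := by
  obtain ⟨r, hρr, hr1⟩ := ENNReal.lt_iff_exists_nnreal_btwn.mp h
  have hroot : ∀ᶠ k : ℕ in atTop, (‖a ^ k‖₊ : ℝ≥0∞) ^ (1 / k : ℝ) < r :=
    (spectrum.pow_nnnorm_pow_one_div_tendsto_nhds_spectralRadius a).eventually_lt_const hρr
  refine Summable.of_norm_bounded_eventually_nat
    (summable_geometric_of_lt_one r.coe_nonneg (by exact_mod_cast hr1)) ?_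
  filter_upwards [hroot, eventually_ne_atTop 0] with k hk hk0
  have : (‖a ^ k‖₊ : ℝ≥0∞) ≤ (r : ℝ≥0∞) ^ k := by
    simpa [← ENNReal.rpow_natCast, ← ENNReal.rpow_mul, hk0] using
      ENNReal.rpow_le_rpow hk.le (Nat.cast_nonneg k : (0 : ℝ) ≤ k)
  rw [norm_norm]
  exact_mod_cast this

end BanachAlgebra

namespace Matrix

variable {ι : Type*} [Fintype ι] {𝕜 : Type*} [RCLike 𝕜]

theorem exists_mulVec_eq_smul_of_mem_spectrum {K : Type*} [Field K] [DecidableEq ι]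
    {A : Matrix ι ι K} {μ : K} (h : μ ∈ spectrum K A) : ∃ v ≠ 0, A *ᵥ v = μ • v := by
  rw [← spectrum_toLin', ← Module.End.hasEigenvalue_iff_mem_spectrum] at h
  obtain ⟨v, hv⟩ := h.exists_hasEigenvector
  exact ⟨v, hv.2, by simpa using hv.apply_eq_smul⟩

theorem norm_lt_one_of_posDef_sub_conjTranspose_mul_mul {A X : Matrix ι ι 𝕜} (hX : X.PosDef)
    (hY : (X - Aᴴ * X * A).PosDef) {μ : 𝕜} {v : ι → 𝕜} (hv : v ≠ 0) (hAv : A *ᵥ v = μ • v) :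
    ‖μ‖ < 1 := by
  set c := star v ⬝ᵥ X *ᵥ v
  have hquad : star v ⬝ᵥ (Aᴴ * X * A) *ᵥ v = (‖μ‖ ^ 2 : ℝ) * c := by
    rw [← mulVec_mulVec, ← mulVec_mulVec, dotProduct_mulVec, ← star_mulVec, hAv,
      mulVec_smul, star_smul, smul_dotProduct, dotProduct_smul, smul_smul, smul_eq_mul,
      RCLike.star_def, RCLike.conj_mul]
    norm_cast
  have hc : 0 < RCLike.re c := hX.re_dotProduct_pos hv
  have hsub := hY.re_dotProduct_pos hv
  rw [sub_mulVec, dotProduct_sub, hquad, map_sub, RCLike.re_ofReal_mul] at hsub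
  have : ‖μ‖ ^ 2 < 1 := by nlinarith
  exact (sq_lt_one_iff₀ (norm_nonneg μ)).mp this

theorem re_star_dotProduct_map_ofReal_mulVec (X : Matrix ι ι ℝ) (v : ι → 𝕜) :
    RCLike.re (star v ⬝ᵥ X.map ((↑) : ℝ → 𝕜) *ᵥ v) =
      (fun i => RCLike.re (v i)) ⬝ᵥ X *ᵥ (fun i => RCLike.re (v i)) +
        (fun i => RCLike.im (v i)) ⬝ᵥ X *ᵥ (fun i => RCLike.im (v i)) := by
  simp only [dotProduct, mulVec, map_apply, Pi.star_apply, RCLike.star_def, map_sum,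
    Finset.mul_sum, ← Finset.sum_add_distrib, RCLike.mul_re, RCLike.conj_re, RCLike.conj_im,
    RCLike.ofReal_re, RCLike.ofReal_im, RCLike.im_ofReal_mul]
  refine Finset.sum_congr rfl fun i _ => Finset.sum_congr rfl fun j _ => ?_
  ring

theorem PosDef.map_ofReal {X : Matrix ι ι ℝ} (hX : X.PosDef) :
    (X.map ((↑) : ℝ → 𝕜)).PosDef := by
  have hherm : (X.map ((↑) : ℝ → 𝕜)).IsHermitian :=
    hX.isHermitian.map _ fun x => by simp
  refine .of_dotProduct_mulVec_pos hherm fun v hv => RCLike.pos_iff.mpr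
    ⟨?_, hherm.im_star_dotProduct_mulVec_self v⟩
  rw [re_star_dotProduct_map_ofReal_mulVec]
  have hre := hX.posSemidef.dotProduct_mulVec_nonneg (fun i => RCLike.re (v i))
  have him := hX.posSemidef.dotProduct_mulVec_nonneg (fun i => RCLike.im (v i))
  simp only [star_trivial] at hre him
  by_cases h : (fun i => RCLike.re (v i)) = 0
  · have hv' : (fun i => RCLike.im (v i)) ≠ 0 := fun h' => hv <| funext fun i =>
      RCLike.ext (by simpa using congrFun h i) (by simpa using congrFun h' i)
    have := hX.dotProduct_mulVec_pos hv'
    simp only [star_trivial] at this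
    linarith
  · have := hX.dotProduct_mulVec_pos h
    simp only [star_trivial] at this
    linarith

theorem PosSemidef.tsum {β : Type*} {f : β → Matrix ι ι 𝕜} (hf : Summable f)
    (h : ∀ k, (f k).PosSemidef) : (∑' k, f k).PosSemidef := by
  refine .of_dotProduct_mulVec_nonneg ?_ fun x => ?_
  · rw [IsHermitian, conjTranspose_tsum]
    exact tsum_congr fun k => (h k).isHermitian
  · let q : Matrix ι ι 𝕜 →+ 𝕜 :=
      { toFun := fun B => star x ⬝ᵥ B *ᵥ x
        map_zero' := by simp
        map_add' := fun B C => by simp [add_mulVec, dotProduct_add] }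
    have hq : Continuous q :=
      continuous_const.dotProduct (continuous_id.matrix_mulVec continuous_const)
    exact (hf.hasSum.map q hq).nonneg fun k => (h k).dotProduct_mulVec_nonneg x

variable [DecidableEq ι]

theorem tsum_conjTranspose_pow_mul_pow_sub {A : Matrix ι ι 𝕜}
    (hA : Summable fun k => (A ^ k)ᴴ * A ^ k) :
    (∑' k, (A ^ k)ᴴ * A ^ k) - Aᴴ * (∑' k, (A ^ k)ᴴ * A ^ k) * A = 1 := by
  have hshift : ∀ k, Aᴴ * ((A ^ k)ᴴ * A ^ k) * A = (A ^ (k + 1))ᴴ * A ^ (k + 1) := by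
    intro k
    rw [pow_succ, conjTranspose_mul]
    simp only [mul_assoc]
  rw [← hA.tsum_mul_left, ← (hA.mul_left Aᴴ).tsum_mul_right]
  simp only [hshift]
  rw [hA.tsum_eq_zero_add]
  simp

theorem posDef_tsum_conjTranspose_pow_mul_pow {A : Matrix ι ι 𝕜}
    (hA : Summable fun k => (A ^ k)ᴴ * A ^ k) :
    (∑' k, (A ^ k)ᴴ * A ^ k).PosDef := by
  have hX := PosSemidef.tsum hA fun k => posSemidef_conjTranspose_mul_self (A ^ k)
  rw [← sub_add_cancel (∑' k, (A ^ k)ᴴ * A ^ k) (Aᴴ * _ * A),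
    tsum_conjTranspose_pow_mul_pow_sub hA]
  exact PosDef.one.add_posSemidef (hX.conjTranspose_mul_mul_same A)

end Matrix

section Frobenius

-- The Frobenius norm is submultiplicative and invariant under `ᴴ` and under `Matrix.map ofReal`.
attribute [local instance] Matrix.frobeniusNormedRing Matrix.frobeniusNormedAlgebra

theorem Matrix.summable_conjTranspose_pow_mul_pow {ι 𝕜 : Type*} [Fintype ι] [DecidableEq ι]
    [RCLike 𝕜] {A : Matrix ι ι 𝕜} (hA : Summable fun k => ‖A ^ k‖) :
    Summable fun k => (A ^ k)ᴴ * A ^ k := by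
  refine .of_norm_bounded_eventually_nat hA ?_
  filter_upwards [hA.tendsto_atTop_zero.eventually_le_const zero_lt_one] with k hk
  calc ‖(A ^ k)ᴴ * A ^ k‖ ≤ ‖A ^ k‖ * ‖A ^ k‖ := by
        simpa only [frobenius_norm_conjTranspose] using frobenius_norm_mul (A ^ k)ᴴ (A ^ k)
    _ ≤ ‖A ^ k‖ := mul_le_of_le_one_left (norm_nonneg _) (by simpa using hk)

theorem IsSchur.summable_conjTranspose_pow_mul_pow {n : ℕ} {M : Matrix (Fin n) (Fin n) ℝ}
    (hM : IsSchur M) : Summable fun k => (M ^ k)ᴴ * M ^ k := by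
  refine Matrix.summable_conjTranspose_pow_mul_pow <|
    (summable_norm_pow_of_spectralRadius_lt_one
      (spectralRadius_lt_one_of_forall_norm_lt_one hM)).congr fun k => ?_
  rw [← frobenius_norm_map_eq (M ^ k) _ Complex.norm_real]
  exact congrArg norm (Matrix.map_pow M Complex.ofRealHom k).symm

end Frobenius

/-- `M` is Schur stable iff there is a symmetric positive definite `X` with
`MᵀXM - X` negative definite (equivalently `X - MᵀXM` positive definite). -/
theorem isSchur_iff_exists_lyapunov {n : ℕ} (M : Matrix (Fin n) (Fin n) ℝ) :
    IsSchur M ↔ ∃ X : Matrix (Fin n) (Fin n) ℝ,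
      X.PosDef ∧ X.IsSymm ∧ (X - Mᵀ * X * M).PosDef := by
  constructor
  · intro hM
    have hsum := hM.summable_conjTranspose_pow_mul_pow
    have hX := posDef_tsum_conjTranspose_pow_mul_pow hsum
    refine ⟨_, hX, isHermitian_iff_isSymm.mp hX.isHermitian, ?_⟩
    rw [← conjTranspose_eq_transpose_of_trivial, tsum_conjTranspose_pow_mul_pow_sub hsum]
    exact PosDef.one
  · rintro ⟨X, hX, -, hY⟩ μ hμ
    obtain ⟨v, hv, hMv⟩ := exists_mulVec_eq_smul_of_mem_spectrum hμ
    refine norm_lt_one_of_posDef_sub_conjTranspose_mul_mul hX.map_ofReal ?_ hv hMv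
    convert hY.map_ofReal (𝕜 := ℂ) using 1
    ext i j
    simp [mul_apply]
end

section
/- If A is Schur stable, then for any symmetric matrix Q ∈ ℝ^{n×n}, the Lyapunov equation AᵀXA + Q = X has a unique symmetric solution, given by X = Σ_{j=0}^∞ (Aᵀ)^j Q A^j, and this series converges. -/
/-!
Gelfand's formula turns `ρ(A) < 1` into a geometric bound `‖Aʲ‖ ≤ rʲ` (eventually, for some
`r < 1`), so the terms `(Aᵀ)ʲ M Aʲ` decay like `r²ʲ` and the series converges. Shifting the index
shows that its sum solves the equation. The difference `D` of two solutions satisfies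
`D = (Aᵀ)ʲ D Aʲ` for every `j`, and the right-hand side tends to `0`.
-/

open Matrix

open Filter
open scoped NNReal

theorem spectrum.eventually_nnnorm_pow_lt_of_spectralRadius_lt {A : Type*} [NormedRing A]
    [NormedAlgebra ℂ A] [CompleteSpace A] (a : A) {r : ℝ≥0} (h : spectralRadius ℂ a < r) :
    ∀ᶠ j : ℕ in atTop, ‖a ^ j‖₊ < r ^ j := by
  filter_upwards [(pow_nnnorm_pow_one_div_tendsto_nhds_spectralRadius a).eventually_lt_const h,
    eventually_gt_atTop 0] with j hj hj0
  rw [one_div, ENNReal.rpow_inv_lt_iff (by positivity), ENNReal.rpow_natCast] at hj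
  exact_mod_cast hj

section Monoid

variable {R : Type*} [Monoid R]

theorem pow_succ_mul_mul_pow_succ (a b d : R) (j : ℕ) :
    b ^ (j + 1) * d * a ^ (j + 1) = b * (b ^ j * d * a ^ j) * a := by
  rw [pow_succ' b, pow_succ a]
  simp only [mul_assoc]

theorem pow_mul_mul_pow_eq_self {a b d : R} (h : b * d * a = d) (j : ℕ) :
    b ^ j * d * a ^ j = d := by
  induction j with
  | zero => simp
  | succ j ih => rw [pow_succ_mul_mul_pow_succ, ih, h]

end Monoid

theorem Summable.mul_tsum_pow_mul_mul_pow_mul_add {R : Type*} [Ring R] [TopologicalSpace R]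
    [IsTopologicalRing R] [T2Space R] {a b d : R}
    (h : Summable fun j : ℕ => b ^ j * d * a ^ j) :
    b * (∑' j : ℕ, b ^ j * d * a ^ j) * a + d = ∑' j : ℕ, b ^ j * d * a ^ j := by
  conv_rhs => rw [h.tsum_eq_zero_add]
  rw [← h.tsum_mul_left, ← (h.mul_left b).tsum_mul_right]
  simp only [pow_succ_mul_mul_pow_succ, pow_zero, one_mul, mul_one, add_comm]

namespace Matrix

variable {m k α : Type*}

theorem IsSymm.transpose_mul_mul [Fintype m] [CommSemiring α] {M : Matrix m m α}
    (hM : M.IsSymm) (B : Matrix m k α) : (Bᵀ * M * B).IsSymm := by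
  rw [IsSymm, transpose_mul, transpose_mul, transpose_transpose, hM.eq, Matrix.mul_assoc]

theorem IsSymm.tsum {ι : Type*} [AddCommMonoid α] [TopologicalSpace α] [T2Space α]
    {f : ι → Matrix m m α} (hf : ∀ i, (f i).IsSymm) : (∑' i, f i).IsSymm := by
  rw [IsSymm, transpose_tsum]
  exact tsum_congr fun i => (hf i).eq

open scoped Matrix.Norms.Frobenius in
theorem frobenius_norm_transpose_pow_mul_mul_pow_le [Fintype m] [DecidableEq m] [RCLike α]
    (A M : Matrix m m α) (j : ℕ) : ‖Aᵀ ^ j * M * A ^ j‖ ≤ ‖M‖ * ‖A ^ j‖ ^ 2 :=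
  calc ‖Aᵀ ^ j * M * A ^ j‖ ≤ ‖Aᵀ ^ j‖ * ‖M‖ * ‖A ^ j‖ := norm_mul₃_le
    _ = ‖M‖ * ‖A ^ j‖ ^ 2 := by rw [← transpose_pow, frobenius_norm_transpose]; ring

end Matrix

namespace IsSchur

variable {n : ℕ} {A : Matrix (Fin n) (Fin n) ℝ}

section Frobenius

open scoped Matrix.Norms.Frobenius

theorem spectralRadius_lt_one (hA : IsSchur A) : spectralRadius ℂ (A.map Complex.ofReal) < 1 := by
  rcases (spectrum ℂ (A.map Complex.ofReal)).eq_empty_or_nonempty with h | h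
  · simp [spectralRadius, h]
  · exact_mod_cast spectrum.spectralRadius_lt_of_forall_lt_of_nonempty h fun z hz => by
      simpa [← NNReal.coe_lt_coe] using hA z hz

theorem exists_frobenius_norm_pow_le (hA : IsSchur A) :
    ∃ r : ℝ, 0 ≤ r ∧ r < 1 ∧ ∀ᶠ j : ℕ in atTop, ‖A ^ j‖ ≤ r ^ j := by
  obtain ⟨r, hρr, hr1⟩ := ENNReal.lt_iff_exists_nnreal_btwn.mp hA.spectralRadius_lt_one
  refine ⟨r, r.coe_nonneg, by exact_mod_cast hr1, ?_⟩
  filter_upwards [spectrum.eventually_nnnorm_pow_lt_of_spectralRadius_lt _ hρr] with j hj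
  have hnorm : ‖A ^ j‖ = ‖A.map Complex.ofReal ^ j‖ := by
    change _ = ‖Complex.ofRealHom.mapMatrix A ^ j‖
    rw [← map_pow, RingHom.mapMatrix_apply]
    exact (frobenius_norm_map_eq _ _ Complex.norm_real).symm
  rw [hnorm]
  exact_mod_cast hj.le

theorem summable_transpose_pow_mul_mul_pow (hA : IsSchur A) (M : Matrix (Fin n) (Fin n) ℝ) :
    Summable fun j : ℕ => Aᵀ ^ j * M * A ^ j := by
  obtain ⟨r, hr0, hr1, hr⟩ := hA.exists_frobenius_norm_pow_le
  refine Summable.of_norm_bounded_eventually_nat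
    ((summable_geometric_of_lt_one (r := r ^ 2) (by positivity)
      (pow_lt_one₀ hr0 hr1 two_ne_zero)).mul_left ‖M‖) ?_
  filter_upwards [hr] with j hj
  calc ‖Aᵀ ^ j * M * A ^ j‖ ≤ ‖M‖ * ‖A ^ j‖ ^ 2 :=
        frobenius_norm_transpose_pow_mul_mul_pow_le A M j
    _ ≤ ‖M‖ * (r ^ 2) ^ j := by rw [← pow_mul, mul_comm 2 j, pow_mul]; gcongr

end Frobenius

theorem eq_zero_of_transpose_mul_mul_eq_self (hA : IsSchur A) {D : Matrix (Fin n) (Fin n) ℝ}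
    (hD : Aᵀ * D * A = D) : D = 0 := by
  have hlim := (hA.summable_transpose_pow_mul_mul_pow D).tendsto_atTop_zero
  simp only [pow_mul_mul_pow_eq_self hD] at hlim
  exact tendsto_nhds_unique tendsto_const_nhds hlim

theorem eq_of_transpose_mul_mul_add_eq (hA : IsSchur A) {Q X Y : Matrix (Fin n) (Fin n) ℝ}
    (hX : Aᵀ * X * A + Q = X) (hY : Aᵀ * Y * A + Q = Y) : X = Y := by
  rw [← sub_eq_zero]
  refine hA.eq_zero_of_transpose_mul_mul_eq_self ?_
  rw [Matrix.mul_sub, Matrix.sub_mul]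
  conv_rhs => rw [← hX, ← hY]
  abel

end IsSchur

/-- For Schur stable `A` and symmetric `Q`, the Lyapunov equation `AᵀXA + Q = X`
has the unique symmetric solution `X = ∑ (Aᵀ)ʲ Q Aʲ`, and the series converges. -/
theorem lyapunov_unique_solution {n : ℕ} (A Q : Matrix (Fin n) (Fin n) ℝ)
    (hA : IsSchur A) (hQ : Q.IsSymm) :
    Summable (fun j : ℕ => Aᵀ ^ j * Q * A ^ j) ∧
    (∑' j : ℕ, Aᵀ ^ j * Q * A ^ j).IsSymm ∧
    Aᵀ * (∑' j : ℕ, Aᵀ ^ j * Q * A ^ j) * A + Q = ∑' j : ℕ, Aᵀ ^ j * Q * A ^ j ∧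
    ∀ X : Matrix (Fin n) (Fin n) ℝ, X.IsSymm → Aᵀ * X * A + Q = X →
      X = ∑' j : ℕ, Aᵀ ^ j * Q * A ^ j := by
  have hsum := hA.summable_transpose_pow_mul_mul_pow Q
  have hfix := hsum.mul_tsum_pow_mul_mul_pow_mul_add
  have hsymm : ∀ j : ℕ, (Aᵀ ^ j * Q * A ^ j).IsSymm := fun j => by
    rw [← transpose_pow]
    exact hQ.transpose_mul_mul (A ^ j)
  exact ⟨hsum, IsSymm.tsum hsymm, hfix, fun X _ hX => hA.eq_of_transpose_mul_mul_add_eq hX hfix⟩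
end

section
/- If A is Schur stable and Q is positive semidefinite, then the unique solution X of the Lyapunov equation AᵀXA + Q = X is positive semidefinite; if moreover Q is positive definite, then X is positive definite. -/
open Matrix

/-!
By Gelfand's formula, Schur stability gives `A ^ N → 0`. Iterating the equation,
`X = (A ^ N)ᵀ X A ^ N + ∑ k < N, (A ^ k)ᵀ Q A ^ k`, so `X` is the limit of these partial
sums, which are positive semidefinite; the positive semidefinite cone is closed, hence
`X ⪰ 0`. Then `X = AᵀXA + Q` with `AᵀXA ⪰ 0`, so `X ≻ 0` as soon as `Q ≻ 0`.
-/

open Filter Topology Finset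

open scoped NNReal

theorem spectrum.tendsto_pow_atTop_nhds_zero_of_spectralRadius_lt_one {A : Type*} [NormedRing A]
    [NormedAlgebra ℂ A] [CompleteSpace A] {a : A} (ha : spectralRadius ℂ a < 1) :
    Tendsto (a ^ ·) atTop (𝓝 0) := by
  obtain ⟨r, har, hr1⟩ := exists_between ha
  lift r to ℝ≥0 using (hr1.trans_le le_top).ne
  have hle : ∀ᶠ k : ℕ in atTop, ‖a ^ k‖₊ ≤ r ^ k := by
    filter_upwards [(pow_nnnorm_pow_one_div_tendsto_nhds_spectralRadius a).eventually_lt_const har,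
      eventually_ge_atTop 1] with k hk hk1
    have hk0 : (k : ℝ) ≠ 0 := by positivity
    have := ENNReal.rpow_lt_rpow hk (by positivity : (0 : ℝ) < k)
    rw [← ENNReal.rpow_mul, one_div, inv_mul_cancel₀ hk0, ENNReal.rpow_one, ENNReal.rpow_natCast,
      ← ENNReal.coe_pow, ENNReal.coe_lt_coe] at this
    exact this.le
  refine squeeze_zero_norm' (hle.mono fun k hk ↦ ?_)
    (tendsto_pow_atTop_nhds_zero_of_lt_one r.coe_nonneg (by exact_mod_cast hr1))
  exact_mod_cast hk

theorem Matrix.tendsto_pow_atTop_nhds_zero_of_forall_norm_lt_one {m : Type*} [Fintype m]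
    [DecidableEq m] {B : Matrix m m ℂ} (h : ∀ μ ∈ spectrum ℂ B, ‖μ‖ < 1) :
    Tendsto (B ^ ·) atTop (𝓝 0) := by
  -- any submultiplicative norm will do: the spectrum does not depend on it
  let _ := Matrix.linftyOpNormedRing (n := m) (α := ℂ)
  let _ := Matrix.linftyOpNormedAlgebra (n := m) (R := ℂ) (α := ℂ)
  refine spectrum.tendsto_pow_atTop_nhds_zero_of_spectralRadius_lt_one ?_
  rcases (spectrum ℂ B).eq_empty_or_nonempty with hB | hB
  · simp [spectralRadius, hB]
  · exact_mod_cast spectrum.spectralRadius_lt_of_forall_lt_of_nonempty hB (r := 1) fun μ hμ ↦ by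
      simpa [← NNReal.coe_lt_coe] using h μ hμ

theorem IsSchur.tendsto_pow_atTop_nhds_zero {n : ℕ} {A : Matrix (Fin n) (Fin n) ℝ}
    (hA : IsSchur A) : Tendsto (A ^ ·) atTop (𝓝 0) := by
  have hpow (k : ℕ) : ((A.map Complex.ofReal) ^ k).map Complex.re = A ^ k := by
    change ((Complex.ofRealHom.mapMatrix A) ^ k).map Complex.re = A ^ k
    rw [← map_pow, RingHom.mapMatrix_apply, Matrix.map_map]
    ext
    simp
  simpa [Function.comp_def, hpow] using
    ((continuous_id.matrix_map Complex.continuous_re).tendsto 0).comp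
      (Matrix.tendsto_pow_atTop_nhds_zero_of_forall_norm_lt_one hA)

section StarRing

variable {R : Type*} [Ring R] [StarRing R] {a q x : R}

theorem star_pow_mul_mul_pow_add_sum_eq (h : star a * x * a + q = x) (N : ℕ) :
    star (a ^ N) * x * a ^ N + ∑ k ∈ range N, star (a ^ k) * q * a ^ k = x := by
  induction N with
  | zero => simp
  | succ N ih =>
    calc _ = star (a ^ N) * (star a * x * a + q) * a ^ N
          + ∑ k ∈ range N, star (a ^ k) * q * a ^ k := by
          rw [sum_range_succ, pow_succ', star_mul]
          noncomm_ring
      _ = x := by rw [h, ih]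

theorem tendsto_sum_star_pow_mul_mul_pow [TopologicalSpace R] [IsTopologicalRing R]
    [ContinuousStar R] (h : star a * x * a + q = x) (ha : Tendsto (a ^ ·) atTop (𝓝 0)) :
    Tendsto (fun N ↦ ∑ k ∈ range N, star (a ^ k) * q * a ^ k) atTop (𝓝 x) := by
  have hrem : Tendsto (fun N ↦ star (a ^ N) * x * a ^ N) atTop (𝓝 0) := by
    simpa using (ha.star.mul_const x).mul ha
  have hlim := (tendsto_const_nhds (x := x)).sub hrem
  rw [sub_zero] at hlim
  exact hlim.congr fun N ↦ (eq_sub_of_add_eq' (star_pow_mul_mul_pow_add_sum_eq h N)).symm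

end StarRing

theorem Matrix.isClosed_setOf_posSemidef {n R : Type*} [Fintype n] [Ring R] [PartialOrder R]
    [StarRing R] [TopologicalSpace R] [IsTopologicalRing R] [ContinuousStar R]
    [OrderClosedTopology R] : IsClosed {M : Matrix n n R | M.PosSemidef} := by
  simp_rw [posSemidef_iff_dotProduct_mulVec, Set.ofPred_and, Set.ofPred_forall]
  exact (isClosed_eq continuous_id.matrix_conjTranspose continuous_id).inter <|
    isClosed_iInter fun v ↦ isClosed_le continuous_const <|
      continuous_const.dotProduct (continuous_id.matrix_mulVec continuous_const)

/-- If `A` is Schur stable and `Q ⪰ 0`, any solution `X` of `AᵀXA + Q = X` is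
positive semidefinite; if moreover `Q ≻ 0` then `X ≻ 0`. -/
theorem lyapunov_solution_posSemidef {n : ℕ} (A Q X : Matrix (Fin n) (Fin n) ℝ)
    (hA : IsSchur A) (hQ : Q.PosSemidef) (hX : Aᵀ * X * A + Q = X) :
    X.PosSemidef ∧ (Q.PosDef → X.PosDef) := by
  have hX' : star A * X * A + Q = X := by
    rwa [star_eq_conjTranspose, conjTranspose_eq_transpose_of_trivial]
  have hXpsd : X.PosSemidef :=
    isClosed_setOf_posSemidef.mem_of_tendsto
      (tendsto_sum_star_pow_mul_mul_pow hX' hA.tendsto_pow_atTop_nhds_zero)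
      (Eventually.of_forall fun N ↦ posSemidef_sum _ fun k _ ↦
        hQ.conjTranspose_mul_mul_same (A ^ k))
  have hAXA : (Aᵀ * X * A).PosSemidef := by
    simpa using hXpsd.conjTranspose_mul_mul_same A
  exact ⟨hXpsd, fun hQpd ↦ hX ▸ .posSemidef_add hAXA hQpd⟩
end

section
/- Riccati-map comparison identity: Let L ∈ ℝ^{m₂×n}, let X̃ be a symmetric matrix with R₁ + B₁ᵀX̃B₁ invertible, let K = (R₁ + B₁ᵀXB₁)^{-1}B₁ᵀX(A - B₂L) where X is the value matrix of the stabilizing pair (K, L). Set E = R₁ + B₁ᵀX̃B₁ and F = B₁ᵀX̃(A - B₂L). Then X - X̃ = A_{K,L}ᵀ(X - X̃)A_{K,L} + R(X̃) + (EK - F)ᵀE^{-1}(EK - F), where R(X̃) = (A - B₂L)ᵀX̃(A - B₂L) - X̃ + Q - LᵀR₂L - (A - B₂L)ᵀX̃B₁(R₁ + B₁ᵀX̃B₁)^{-1}B₁ᵀX̃(A - B₂L) is the Riccati map. -/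
/-!
Write `Â = A - B₂ L`, so that the closed loop is `Â - B₁ K`. Expanding
`(Â - B₁ K)ᵀ X̃ (Â - B₁ K)` and completing the square in `K` with respect to the symmetric matrix
`E = R₁ + B₁ᵀ X̃ B₁` turns `X̃` minus the closed-loop Lyapunov expression for `X̃` into the Riccati
map plus `(E K - F)ᵀ E⁻¹ (E K - F)`; subtracting this from the Lyapunov equation for `X` gives the
identity.
-/

open Matrix

namespace Matrix

variable {m n α : Type*} [Fintype m] [CommRing α]

theorem transpose_sub_mul_nonsing_inv_mul_sub_of_isSymm [DecidableEq m] {E : Matrix m m α}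
    (hE : E.IsSymm) (hdet : IsUnit E.det) (K F : Matrix m n α) :
    (E * K - F)ᵀ * E⁻¹ * (E * K - F) = Kᵀ * E * K - Kᵀ * F - Fᵀ * K + Fᵀ * E⁻¹ * F := by
  have cancel_left : ∀ Y : Matrix m n α, E * (E⁻¹ * Y) = Y := fun Y => by
    rw [← Matrix.mul_assoc, mul_nonsing_inv _ hdet, Matrix.one_mul]
  have cancel_right : ∀ Y : Matrix m n α, E⁻¹ * (E * Y) = Y := fun Y => by
    rw [← Matrix.mul_assoc, nonsing_inv_mul _ hdet, Matrix.one_mul]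
  rw [transpose_sub, transpose_mul, hE.eq]
  simp only [Matrix.sub_mul, Matrix.mul_sub, Matrix.mul_assoc, cancel_left, cancel_right]
  abel

theorem transpose_sub_mul_mul_sub [Fintype n] (Â P : Matrix n n α) (B : Matrix n m α)
    (K : Matrix m n α) :
    (Â - B * K)ᵀ * P * (Â - B * K)
      = Âᵀ * P * Â - Kᵀ * (Bᵀ * P * Â) - Âᵀ * P * B * K + Kᵀ * (Bᵀ * P * B) * K := by
  simp only [transpose_sub, transpose_mul, Matrix.sub_mul, Matrix.mul_sub, Matrix.mul_assoc]
  abel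

theorem riccati_comparison [DecidableEq m] [Fintype n] (Â X Xt Q : Matrix n n α)
    (B : Matrix n m α) (R : Matrix m m α) (K : Matrix m n α) (hR : R.IsSymm) (hXt : Xt.IsSymm)
    (hdet : IsUnit (R + Bᵀ * Xt * B).det)
    (hX : X = (Â - B * K)ᵀ * X * (Â - B * K) + Q + Kᵀ * R * K) :
    X - Xt = (Â - B * K)ᵀ * (X - Xt) * (Â - B * K)
      + (Âᵀ * Xt * Â - Xt + Q - Âᵀ * Xt * B * (R + Bᵀ * Xt * B)⁻¹ * (Bᵀ * Xt * Â))
      + ((R + Bᵀ * Xt * B) * K - Bᵀ * Xt * Â)ᵀ * (R + Bᵀ * Xt * B)⁻¹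
          * ((R + Bᵀ * Xt * B) * K - Bᵀ * Xt * Â) := by
  have hE : (R + Bᵀ * Xt * B).IsSymm := by
    simp only [IsSymm, transpose_add, transpose_mul, transpose_transpose, hR.eq, hXt.eq,
      Matrix.mul_assoc]
  have hF : (Bᵀ * Xt * Â)ᵀ = Âᵀ * Xt * B := by
    simp only [transpose_mul, transpose_transpose, hXt.eq, Matrix.mul_assoc]
  rw [transpose_sub_mul_nonsing_inv_mul_sub_of_isSymm hE hdet, hF, Matrix.mul_sub _ X Xt,
    Matrix.sub_mul, transpose_sub_mul_mul_sub Â Xt]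
  conv_lhs => rw [hX]
  simp only [Matrix.mul_add, Matrix.add_mul, Matrix.mul_assoc]
  abel

end Matrix

theorem riccati_map_comparison_general {n m₁ m₂ : ℕ}
    (A : Matrix (Fin n) (Fin n) ℝ) (B₁ : Matrix (Fin n) (Fin m₁) ℝ)
    (B₂ : Matrix (Fin n) (Fin m₂) ℝ) (Q : Matrix (Fin n) (Fin n) ℝ)
    (R₁ : Matrix (Fin m₁) (Fin m₁) ℝ) (R₂ : Matrix (Fin m₂) (Fin m₂) ℝ)
    (K : Matrix (Fin m₁) (Fin n) ℝ) (L : Matrix (Fin m₂) (Fin n) ℝ)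
    (X Xt : Matrix (Fin n) (Fin n) ℝ)
    (E : Matrix (Fin m₁) (Fin m₁) ℝ) (F : Matrix (Fin m₁) (Fin n) ℝ)
    (hR₁ : R₁.PosDef) (hXt : Xt.IsSymm)
    (hEinv : IsUnit (R₁ + B₁ᵀ * Xt * B₁))
    (hX : (A - B₁ * K - B₂ * L)ᵀ * X * (A - B₁ * K - B₂ * L)
            + Q + Kᵀ * R₁ * K - Lᵀ * R₂ * L = X)
    (hE : E = R₁ + B₁ᵀ * Xt * B₁)
    (hF : F = B₁ᵀ * Xt * (A - B₂ * L)) :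
    X - Xt =
      (A - B₁ * K - B₂ * L)ᵀ * (X - Xt) * (A - B₁ * K - B₂ * L)
      + ((A - B₂ * L)ᵀ * Xt * (A - B₂ * L) - Xt + Q - Lᵀ * R₂ * L
          - (A - B₂ * L)ᵀ * Xt * B₁ * (R₁ + B₁ᵀ * Xt * B₁)⁻¹ * (B₁ᵀ * Xt * (A - B₂ * L)))
      + (E * K - F)ᵀ * E⁻¹ * (E * K - F) := by
  subst hE hF
  have hloop : A - B₁ * K - B₂ * L = (A - B₂ * L) - B₁ * K := by abel
  rw [hloop] at hX ⊢
  have hX' : X = ((A - B₂ * L) - B₁ * K)ᵀ * X * ((A - B₂ * L) - B₁ * K)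
      + (Q - Lᵀ * R₂ * L) + Kᵀ * R₁ * K :=
    hX.symm.trans (by abel)
  refine (riccati_comparison (A - B₂ * L) X Xt (Q - Lᵀ * R₂ * L) B₁ R₁ K hR₁.isHermitian.eq hXt
    ((isUnit_iff_isUnit_det _).mp hEinv) hX').trans ?_
  rw [← add_sub_assoc (_ - Xt)]

/-- Riccati-map comparison identity. -/
theorem riccati_map_comparison {n m₁ m₂ : ℕ}
    (A : Matrix (Fin n) (Fin n) ℝ) (B₁ : Matrix (Fin n) (Fin m₁) ℝ)
    (B₂ : Matrix (Fin n) (Fin m₂) ℝ) (Q : Matrix (Fin n) (Fin n) ℝ)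
    (R₁ : Matrix (Fin m₁) (Fin m₁) ℝ) (R₂ : Matrix (Fin m₂) (Fin m₂) ℝ)
    (K : Matrix (Fin m₁) (Fin n) ℝ) (L : Matrix (Fin m₂) (Fin n) ℝ)
    (X Xt : Matrix (Fin n) (Fin n) ℝ)
    (E : Matrix (Fin m₁) (Fin m₁) ℝ) (F : Matrix (Fin m₁) (Fin n) ℝ)
    (hQ : Q.IsSymm) (hR₁ : R₁.PosDef) (hR₂ : R₂.PosDef) (hXt : Xt.IsSymm)
    (hEinv : IsUnit (R₁ + B₁ᵀ * Xt * B₁))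
    (hXinv : IsUnit (R₁ + B₁ᵀ * X * B₁))
    (hstab : IsSchur (A - B₁ * K - B₂ * L))
    (hX : (A - B₁ * K - B₂ * L)ᵀ * X * (A - B₁ * K - B₂ * L)
            + Q + Kᵀ * R₁ * K - Lᵀ * R₂ * L = X)
    (hK : K = (R₁ + B₁ᵀ * X * B₁)⁻¹ * (B₁ᵀ * X * (A - B₂ * L)))
    (hE : E = R₁ + B₁ᵀ * Xt * B₁)
    (hF : F = B₁ᵀ * Xt * (A - B₂ * L)) :
    X - Xt =
      (A - B₁ * K - B₂ * L)ᵀ * (X - Xt) * (A - B₁ * K - B₂ * L)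
      + ((A - B₂ * L)ᵀ * Xt * (A - B₂ * L) - Xt + Q - Lᵀ * R₂ * L
          - (A - B₂ * L)ᵀ * Xt * B₁ * (R₁ + B₁ᵀ * Xt * B₁)⁻¹ * (B₁ᵀ * Xt * (A - B₂ * L)))
      + (E * K - F)ᵀ * E⁻¹ * (E * K - F) :=
  riccati_map_comparison_general A B₁ B₂ Q R₁ R₂ K L X Xt E F hR₁ hXt hEinv hX hE hF
end

section
/- Riccati map expansion in L: Suppose X̃ solves the DARE (A - B₂L̃)ᵀX̃(A - B₂L̃) - X̃ + Q - L̃ᵀR₂L̃ - (A - B₂L̃)ᵀX̃B₁(R₁ + B₁ᵀX̃B₁)^{-1}B₁ᵀX̃(A - B₂L̃) = 0, with K̃ = (R₁ + B₁ᵀX̃B₁)^{-1}B₁ᵀX̃(A - B₂L̃) and Ṽ = -R₂L̃ - B₂ᵀX̃(A - B₁K̃ - B₂L̃). Then for any L, the Riccati map evaluated at X̃ with parameter L equals (L - L̃)ᵀṼ + Ṽᵀ(L - L̃) - (L - L̃)ᵀO(L - L̃), where O = R₂ - B₂ᵀX̃B₂ + B₂ᵀX̃B₁(R₁ + B₁ᵀX̃B₁)^{-1}B₁ᵀX̃B₂.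 -/
open Matrix

/-!
Substituting the `B₁`-gain `(R₁ + B₁ᵀ X B₁)⁻¹ B₁ᵀ X (A - B₂ L)` rewrites the Riccati map as
`(A - B₂ L)ᵀ M (A - B₂ L) - X + Q - Lᵀ R₂ L`, where the symmetric weight
`M = X - X B₁ (R₁ + B₁ᵀ X B₁)⁻¹ B₁ᵀ X` does not depend on `L`. The map is therefore a quadratic
polynomial in `L`; its expansion around `L̃`, where it vanishes by the DARE, has linear coefficient
`Ṽ = -R₂ L̃ - B₂ᵀ M (A - B₂ L̃)` and quadratic coefficient `-(R₂ - B₂ᵀ M B₂) = -O`.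
-/

namespace Matrix

variable {α : Type*} [CommRing α] {ι κ μ ν : Type*} [Fintype ι] [Fintype κ]

/-- The Schur complement of `R + Bᵀ X B` in the block matrix `[X, X B; Bᵀ X, R + Bᵀ X B]`. -/
noncomputable def riccatiWeight [DecidableEq κ] (X : Matrix ι ι α) (B : Matrix ι κ α)
    (R : Matrix κ κ α) : Matrix ι ι α :=
  X - X * B * (R + Bᵀ * X * B)⁻¹ * (Bᵀ * X)

theorem mul_riccatiWeight_mul [DecidableEq κ] (X : Matrix ι ι α) (B : Matrix ι κ α)
    (R : Matrix κ κ α) (Y : Matrix ν ι α) (Z : Matrix ι μ α) :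
    Y * riccatiWeight X B R * Z
      = Y * X * Z - Y * X * B * (R + Bᵀ * X * B)⁻¹ * (Bᵀ * X * Z) := by
  simp only [riccatiWeight, Matrix.mul_sub, Matrix.sub_mul, Matrix.mul_assoc]

theorem IsSymm.riccatiWeight [DecidableEq κ] {X : Matrix ι ι α} {R : Matrix κ κ α}
    (hX : X.IsSymm) (hR : R.IsSymm) (B : Matrix ι κ α) : (riccatiWeight X B R).IsSymm := by
  have hS : (R + Bᵀ * X * B)⁻¹.IsSymm := by
    refine IsSymm.inv (hR.add ?_)
    simp only [IsSymm, transpose_mul, transpose_transpose, hX.eq, Matrix.mul_assoc]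
  simp only [IsSymm, Matrix.riccatiWeight, transpose_sub, transpose_mul, transpose_transpose, hX.eq,
    hS.eq]
  simp only [Matrix.mul_assoc]

theorem quadratic_sub_mul_expand {M : Matrix ι ι α} {R : Matrix κ κ α} (hM : M.IsSymm)
    (hR : R.IsSymm) (A : Matrix ι μ α) (B : Matrix ι κ α) (L L₀ : Matrix κ μ α) :
    (A - B * L)ᵀ * M * (A - B * L) - Lᵀ * R * L
      = (A - B * L₀)ᵀ * M * (A - B * L₀) - L₀ᵀ * R * L₀
        + ((L - L₀)ᵀ * (-(R * L₀) - Bᵀ * M * (A - B * L₀))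
          + (-(R * L₀) - Bᵀ * M * (A - B * L₀))ᵀ * (L - L₀)
          - (L - L₀)ᵀ * (R - Bᵀ * M * B) * (L - L₀)) := by
  simp only [transpose_sub, transpose_neg, transpose_mul, transpose_transpose, hM.eq, hR.eq,
    Matrix.sub_mul, Matrix.mul_sub, Matrix.neg_mul, Matrix.mul_neg, Matrix.mul_assoc]
  abel

end Matrix

theorem riccati_map_expansion_general {n m₁ m₂ : ℕ}
    (A : Matrix (Fin n) (Fin n) ℝ) (B₁ : Matrix (Fin n) (Fin m₁) ℝ)
    (B₂ : Matrix (Fin n) (Fin m₂) ℝ) (Q : Matrix (Fin n) (Fin n) ℝ)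
    (R₁ : Matrix (Fin m₁) (Fin m₁) ℝ) (R₂ : Matrix (Fin m₂) (Fin m₂) ℝ)
    (Lt : Matrix (Fin m₂) (Fin n) ℝ) (Xt : Matrix (Fin n) (Fin n) ℝ)
    (Kt : Matrix (Fin m₁) (Fin n) ℝ)
    (Vt : Matrix (Fin m₂) (Fin n) ℝ) (O : Matrix (Fin m₂) (Fin m₂) ℝ)
    (hR₁ : R₁.PosDef) (hR₂ : R₂.PosDef) (hXt : Xt.IsSymm)
    (hDARE : (A - B₂ * Lt)ᵀ * Xt * (A - B₂ * Lt) - Xt + Q - Ltᵀ * R₂ * Lt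
        - (A - B₂ * Lt)ᵀ * Xt * B₁ * (R₁ + B₁ᵀ * Xt * B₁)⁻¹ * (B₁ᵀ * Xt * (A - B₂ * Lt)) = 0)
    (hKt : Kt = (R₁ + B₁ᵀ * Xt * B₁)⁻¹ * (B₁ᵀ * Xt * (A - B₂ * Lt)))
    (hVt : Vt = -(R₂ * Lt) - B₂ᵀ * Xt * (A - B₁ * Kt - B₂ * Lt))
    (hO : O = R₂ - B₂ᵀ * Xt * B₂
        + B₂ᵀ * Xt * B₁ * (R₁ + B₁ᵀ * Xt * B₁)⁻¹ * (B₁ᵀ * Xt * B₂)) :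
    ∀ L : Matrix (Fin m₂) (Fin n) ℝ,
      (A - B₂ * L)ᵀ * Xt * (A - B₂ * L) - Xt + Q - Lᵀ * R₂ * L
        - (A - B₂ * L)ᵀ * Xt * B₁ * (R₁ + B₁ᵀ * Xt * B₁)⁻¹ * (B₁ᵀ * Xt * (A - B₂ * L))
      = (L - Lt)ᵀ * Vt + Vtᵀ * (L - Lt) - (L - Lt)ᵀ * O * (L - Lt) := by
  intro L
  have hR₂sym : R₂.IsSymm := isHermitian_iff_isSymm.mp hR₂.isHermitian
  have hM := hXt.riccatiWeight (isHermitian_iff_isSymm.mp hR₁.isHermitian) B₁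
  have hmap : ∀ L' : Matrix (Fin m₂) (Fin n) ℝ,
      (A - B₂ * L')ᵀ * Xt * (A - B₂ * L') - Xt + Q - L'ᵀ * R₂ * L'
        - (A - B₂ * L')ᵀ * Xt * B₁ * (R₁ + B₁ᵀ * Xt * B₁)⁻¹ * (B₁ᵀ * Xt * (A - B₂ * L'))
      = (A - B₂ * L')ᵀ * riccatiWeight Xt B₁ R₁ * (A - B₂ * L') - L'ᵀ * R₂ * L' + (Q - Xt) := by
    intro L'
    rw [mul_riccatiWeight_mul]
    abel
  have hVt' : Vt = -(R₂ * Lt) - B₂ᵀ * riccatiWeight Xt B₁ R₁ * (A - B₂ * Lt) := by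
    rw [hVt, sub_right_comm, hKt, mul_riccatiWeight_mul, Matrix.mul_sub]
    simp only [Matrix.mul_assoc]
  have hO' : O = R₂ - B₂ᵀ * riccatiWeight Xt B₁ R₁ * B₂ := by
    rw [hO, mul_riccatiWeight_mul]
    abel
  rw [hmap] at hDARE ⊢
  rw [quadratic_sub_mul_expand hM hR₂sym A B₂ L Lt, add_right_comm, hDARE, zero_add, hVt', hO']

/-- Riccati map expansion in `L` around a DARE solution `X̃` at `L̃`. -/
theorem riccati_map_expansion {n m₁ m₂ : ℕ}
    (A : Matrix (Fin n) (Fin n) ℝ) (B₁ : Matrix (Fin n) (Fin m₁) ℝ)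
    (B₂ : Matrix (Fin n) (Fin m₂) ℝ) (Q : Matrix (Fin n) (Fin n) ℝ)
    (R₁ : Matrix (Fin m₁) (Fin m₁) ℝ) (R₂ : Matrix (Fin m₂) (Fin m₂) ℝ)
    (Lt : Matrix (Fin m₂) (Fin n) ℝ) (Xt : Matrix (Fin n) (Fin n) ℝ)
    (Kt : Matrix (Fin m₁) (Fin n) ℝ)
    (Vt : Matrix (Fin m₂) (Fin n) ℝ) (O : Matrix (Fin m₂) (Fin m₂) ℝ)
    (hQ : Q.IsSymm) (hR₁ : R₁.PosDef) (hR₂ : R₂.PosDef) (hXt : Xt.IsSymm)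
    (hinv : IsUnit (R₁ + B₁ᵀ * Xt * B₁))
    (hDARE : (A - B₂ * Lt)ᵀ * Xt * (A - B₂ * Lt) - Xt + Q - Ltᵀ * R₂ * Lt
        - (A - B₂ * Lt)ᵀ * Xt * B₁ * (R₁ + B₁ᵀ * Xt * B₁)⁻¹ * (B₁ᵀ * Xt * (A - B₂ * Lt)) = 0)
    (hKt : Kt = (R₁ + B₁ᵀ * Xt * B₁)⁻¹ * (B₁ᵀ * Xt * (A - B₂ * Lt)))
    (hVt : Vt = -(R₂ * Lt) - B₂ᵀ * Xt * (A - B₁ * Kt - B₂ * Lt))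
    (hO : O = R₂ - B₂ᵀ * Xt * B₂
        + B₂ᵀ * Xt * B₁ * (R₁ + B₁ᵀ * Xt * B₁)⁻¹ * (B₁ᵀ * Xt * B₂)) :
    ∀ L : Matrix (Fin m₂) (Fin n) ℝ,
      (A - B₂ * L)ᵀ * Xt * (A - B₂ * L) - Xt + Q - Lᵀ * R₂ * L
        - (A - B₂ * L)ᵀ * Xt * B₁ * (R₁ + B₁ᵀ * Xt * B₁)⁻¹ * (B₁ᵀ * Xt * (A - B₂ * L))
      = (L - Lt)ᵀ * Vt + Vtᵀ * (L - Lt) - (L - Lt)ᵀ * O * (L - Lt) :=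
  riccati_map_expansion_general A B₁ B₂ Q R₁ R₂ Lt Xt Kt Vt O hR₁ hR₂ hXt hDARE hKt hVt hO
end
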